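/- For every integer j ≥ 0 and every integer k ≥ 1, ∫_0^1 (log(1+t))^j (log t)^k / (1+t) dt = (−1)^{k+j} · k! · j! · ∑_{n=1}^∞ (−1)^{n+1} s(n, j+1) / (n! · n^k). -/

import Mathlib

open Real

/-- Generalized harmonic number `H_n^{(p)} = ∑_{j=1}^n 1/j^p`. -/
noncomputable def Hp (p n : ℕ) : ℝ := ∑ j ∈ Finset.Icc 1 n, (1:ℝ) / (j:ℝ)^p

/-- Polylogarithm `Li_p(y) = ∑_{n=1}^∞ y^n / n^p`. -/
noncomputable def Li (p : ℕ) (y : ℝ) : ℝ := ∑' n : ℕ, y^(n+1) / ((n:ℝ)+1)^p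

/-- Riemann zeta value `ζ(s) = ∑_{n=1}^∞ 1/n^s`. -/
noncomputable def rzeta (s : ℕ) : ℝ := ∑' n : ℕ, (1:ℝ) / ((n:ℝ)+1)^s

/-- Unsigned Stirling numbers of the first kind. -/
def stirling : ℕ → ℕ → ℕ
  | 0, 0 => 1
  | 0, _+1 => 0
  | _+1, 0 => 0
  | n+1, k+1 => stirling n k + n * stirling n (k+1)

/-- Complete exponential Bell polynomial `Y_k` evaluated at `x_r = (r-1)! H_n^{(r)}`. -/
noncomputable def Y : ℕ → ℕ → ℝ
  | _, 0 => 1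
  | n, (k+1) => ∑ j ∈ Finset.range (k+1),
      (Nat.choose k j : ℝ) * ((Nat.factorial j : ℝ) * Hp (j+1) n) * Y n (k-j)

/-- Alternating harmonic number `L_n(1) = ∑_{j=1}^n (-1)^{j-1}/j`. -/
noncomputable def L (n : ℕ) : ℝ := ∑ j ∈ Finset.Icc 1 n, (-1:ℝ)^(j+1) / (j:ℝ)

/-!
For `|x| < 1`, `(-log (1 - x))^j / (j! (1 - x)) = ∑ₘ s(m+1, j+1) xᵐ / m!`, by induction on
`j`: multiply by `-log (1 - x) = ∑ₗ xˡ⁺¹ / (l+1)` and compute the Cauchy product with a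
convolution identity for `s`. At `x = -t` this expands the integrand into a power series in `t`,
which is integrated termwise against `(-log t)^k`. The substitution `t = e^{-u}` turns
`∫₀¹ tᵐ (-log t)ᵏ dt` into the Gamma integral `k! / (m+1)^(k+1)`, and absolute convergence for
`k ≥ 1` follows from `∑ₘ s(m+1, j+1) / (m! (m+1)(m+2)) ≤ j + 1`.
-/

open scoped Nat

section Stirling

open Finset Nat

theorem stirling_eq_stirlingFirst : stirling = stirlingFirst := by
  funext n k
  induction n generalizing k with
  | zero => cases k <;> rfl
  | succ n ih => cases k <;> simp [stirling, stirlingFirst_succ_succ, ih, add_comm]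

/-- Indexed so that `stirlingCoeff 0 = 0`, which makes the recurrences below uniform in `j`. -/
noncomputable def stirlingCoeff (j m : ℕ) : ℝ := stirlingFirst (m + 1) j / m !

theorem stirlingCoeff_nonneg (j m : ℕ) : 0 ≤ stirlingCoeff j m := by
  unfold stirlingCoeff; positivity

@[simp] theorem stirlingCoeff_zero_left (m : ℕ) : stirlingCoeff 0 m = 0 := by
  simp [stirlingCoeff]

@[simp] theorem stirlingCoeff_one_left (m : ℕ) : stirlingCoeff 1 m = 1 := by
  simp [stirlingCoeff, stirlingFirst_one_right, m.factorial_ne_zero]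

theorem stirlingCoeff_succ_succ (j m : ℕ) :
    stirlingCoeff (j + 1) (m + 1) = stirlingCoeff (j + 1) m + stirlingCoeff j m / (m + 1) := by
  simp only [stirlingCoeff, stirlingFirst_succ_succ (m + 1) j, factorial_succ]
  push_cast
  field_simp

theorem stirlingCoeff_eq_add_sum_range (j n : ℕ) :
    stirlingCoeff (j + 1) n =
      stirlingCoeff (j + 1) 0 + ∑ p ∈ range n, stirlingCoeff j p / (p + 1) := by
  induction n with
  | zero => simp
  | succ n ih => rw [stirlingCoeff_succ_succ, ih, sum_range_succ, add_assoc]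

theorem sum_antidiagonal_stirlingCoeff_div (j n : ℕ) :
    ∑ p ∈ antidiagonal n, stirlingCoeff j p.1 / (p.2 + 1) = j * stirlingCoeff (j + 1) (n + 1) := by
  induction n generalizing j with
  | zero => rcases j with _ | _ | j <;> simp [stirlingCoeff, stirlingFirst]
  | succ n ih =>
    rcases j with _ | i
    · simp
    have split : ∑ p ∈ antidiagonal n, stirlingCoeff i p.1 / ((p.1 + 1) * (p.2 + 1)) =
        (∑ p ∈ antidiagonal n, stirlingCoeff i p.1 / (p.1 + 1) +
          ∑ p ∈ antidiagonal n, stirlingCoeff i p.1 / (p.2 + 1)) / (n + 2) := by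
      rw [← sum_add_distrib, sum_div]
      refine sum_congr rfl fun p hp => ?_
      have hp : (p.1 : ℝ) + p.2 = n := by exact_mod_cast mem_antidiagonal.mp hp
      rw [← hp]
      field_simp
      ring
    have telescope : ∑ p ∈ antidiagonal n, stirlingCoeff i p.1 / (p.1 + 1) =
        stirlingCoeff (i + 1) (n + 1) - stirlingCoeff (i + 1) 0 := by
      rw [sum_antidiagonal_eq_sum_range_succ (fun a _ => stirlingCoeff i a / (a + 1)),
        stirlingCoeff_eq_add_sum_range i (n + 1)]
      ring
    have shift : ∑ p ∈ antidiagonal n, stirlingCoeff (i + 1) (p.1 + 1) / (p.2 + 1) =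
        ∑ p ∈ antidiagonal n, stirlingCoeff (i + 1) p.1 / (p.2 + 1) +
          ∑ p ∈ antidiagonal n, stirlingCoeff i p.1 / ((p.1 + 1) * (p.2 + 1)) := by
      rw [← sum_add_distrib]
      refine sum_congr rfl fun p _ => ?_
      rw [stirlingCoeff_succ_succ, add_div, div_div]
    rw [sum_antidiagonal_succ, shift, split, telescope, ih, ih,
      stirlingCoeff_succ_succ (i + 1) (n + 1)]
    push_cast
    field_simp
    ring

/-- Summation by parts against `1 / ((m+1)(m+2)) = 1/(m+1) - 1/(m+2)`. -/
theorem sum_range_stirlingCoeff_div_add (j N : ℕ) :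
    ∑ m ∈ range N, stirlingCoeff (j + 1) m / ((m + 1) * (m + 2)) + stirlingCoeff (j + 1) N / (N + 1)
      = stirlingCoeff (j + 1) 0 + ∑ m ∈ range N, stirlingCoeff j m / ((m + 1) * (m + 2)) := by
  induction N with
  | zero => simp
  | succ N ih =>
    have step : stirlingCoeff (j + 1) N / ((N + 1) * (N + 2))
        + stirlingCoeff (j + 1) (N + 1) / (N + 1 + 1)
        - stirlingCoeff (j + 1) N / (N + 1) = stirlingCoeff j N / ((N + 1) * (N + 2)) := by
      rw [stirlingCoeff_succ_succ]
      field_simp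
      ring
    rw [sum_range_succ, sum_range_succ]
    push_cast
    linarith

theorem sum_range_stirlingCoeff_div_le (j N : ℕ) :
    ∑ m ∈ range N, stirlingCoeff j m / ((m + 1) * (m + 2)) ≤ j := by
  induction j with
  | zero => simp
  | succ j ih =>
    have h0 : stirlingCoeff (j + 1) 0 ≤ 1 := by
      rcases j with _ | j <;> simp [stirlingCoeff, stirlingFirst]
    have hN : 0 ≤ stirlingCoeff (j + 1) N / (N + 1) :=
      div_nonneg (stirlingCoeff_nonneg _ _) (by positivity)
    push_cast
    linarith [sum_range_stirlingCoeff_div_add j N]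

theorem summable_stirlingCoeff_div (j : ℕ) :
    Summable fun m : ℕ => stirlingCoeff j m / ((m + 1) * (m + 2)) :=
  summable_of_sum_range_le (fun m => div_nonneg (stirlingCoeff_nonneg j m) (by positivity))
    (sum_range_stirlingCoeff_div_le j)

theorem summable_stirlingCoeff_div_pow (j : ℕ) {k : ℕ} (hk : 1 ≤ k) :
    Summable fun m : ℕ => stirlingCoeff j m / ((m : ℝ) + 1) ^ (k + 1) := by
  refine ((summable_stirlingCoeff_div j).mul_left 2).of_nonneg_of_le
    (fun m => div_nonneg (stirlingCoeff_nonneg j m) (by positivity)) fun m => ?_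
  have hpow : ((m : ℝ) + 1) * (m + 2) ≤ 2 * ((m : ℝ) + 1) ^ (k + 1) :=
    calc ((m : ℝ) + 1) * (m + 2) ≤ 2 * ((m : ℝ) + 1) ^ 2 := by nlinarith
      _ ≤ 2 * ((m : ℝ) + 1) ^ (k + 1) := by gcongr <;> [linarith; omega]
  rw [mul_div_assoc', div_le_div_iff₀ (by positivity) (by positivity)]
  nlinarith [stirlingCoeff_nonneg j m]

theorem sum_antidiagonal_stirlingCoeff_mul_pow (j n : ℕ) (x : ℝ) :
    ∑ p ∈ antidiagonal n, stirlingCoeff (j + 1) p.1 * x ^ p.1 * (x ^ (p.2 + 1) / (p.2 + 1)) =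
      ((j : ℝ) + 1) * stirlingCoeff (j + 2) (n + 1) * x ^ (n + 1) := by
  have conv := sum_antidiagonal_stirlingCoeff_div (j + 1) n
  push_cast at conv
  rw [← conv, sum_mul]
  refine sum_congr rfl fun p hp => ?_
  rw [← mem_antidiagonal.mp hp]
  ring

theorem hasSum_stirlingCoeff_mul_pow (j : ℕ) {x : ℝ} (hx : |x| < 1) :
    HasSum (fun m => stirlingCoeff (j + 1) m * x ^ m) ((-log (1 - x)) ^ j / (j ! * (1 - x))) := by
  induction j generalizing x with
  | zero => simpa using hasSum_geometric_of_abs_lt_one hx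
  | succ j ih =>
    have habs : |(|x|)| < 1 := by rwa [abs_abs]
    have hf : Summable fun m => ‖stirlingCoeff (j + 1) m * x ^ m‖ := by
      simpa [norm_mul, abs_of_nonneg (stirlingCoeff_nonneg _ _)] using (ih habs).summable
    have hg : Summable fun l : ℕ => ‖x ^ (l + 1) / (l + 1)‖ := by
      refine (hasSum_pow_div_log_of_abs_lt_one habs).summable.congr fun l => ?_
      rw [norm_div, norm_pow, Real.norm_eq_abs, Real.norm_of_nonneg (by positivity)]
    have hprod := (summable_norm_sum_mul_antidiagonal_of_summable_norm hf hg).of_norm.hasSum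
    rw [← tsum_mul_tsum_eq_tsum_sum_antidiagonal_of_summable_norm hf hg, (ih hx).tsum_eq,
      (hasSum_pow_div_log_of_abs_lt_one hx).tsum_eq] at hprod
    simp only [sum_antidiagonal_stirlingCoeff_mul_pow] at hprod
    have hshift : HasSum (fun n => stirlingCoeff (j + 2) (n + 1) * x ^ (n + 1))
        ((-log (1 - x)) ^ (j + 1) / ((j + 1) ! * (1 - x))) := by
      rw [show (-log (1 - x)) ^ (j + 1) / ((j + 1) ! * (1 - x)) =
          (-log (1 - x)) ^ j / (j ! * (1 - x)) * -log (1 - x) / (j + 1) by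
        push_cast [factorial_succ]
        field_simp
        ring]
      refine (hprod.div_const ((j : ℝ) + 1)).congr_fun fun n => ?_
      field_simp
    refine (hasSum_nat_add_iff' 1).mp ?_
    simpa [stirlingCoeff, stirlingFirst] using hshift

end Stirling

section Integrals

open Set MeasureTheory

theorem image_exp_neg_Ioi_zero : (fun u : ℝ => exp (-u)) '' Ioi 0 = Ioo 0 1 := by
  ext t
  constructor
  · rintro ⟨u, hu, rfl⟩
    exact ⟨exp_pos _, exp_lt_one_iff.mpr (neg_lt_zero.mpr hu)⟩
  · rintro ⟨h0, h1⟩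
    exact ⟨-log t, neg_pos.mpr (log_neg h0 h1), by simp [exp_log h0]⟩

theorem hasDerivWithinAt_exp_neg (u : ℝ) (s : Set ℝ) :
    HasDerivWithinAt (fun u : ℝ => exp (-u)) (-exp (-u)) s u := by
  simpa using ((hasDerivAt_neg u).exp).hasDerivWithinAt

variable {E : Type*} [NormedAddCommGroup E] [NormedSpace ℝ E]

theorem integral_comp_exp_neg_Ioi (g : ℝ → E) :
    ∫ u in Ioi 0, exp (-u) • g (exp (-u)) = ∫ t in Ioo 0 1, g t := by
  rw [← image_exp_neg_Ioi_zero, integral_image_eq_integral_abs_deriv_smul measurableSet_Ioi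
    (fun u _ => hasDerivWithinAt_exp_neg u _) (fun a _ b _ h => neg_injective (exp_injective h))]
  simp [abs_of_pos (exp_pos _)]

theorem integrableOn_comp_exp_neg_Ioi (g : ℝ → E) :
    IntegrableOn (fun u => exp (-u) • g (exp (-u))) (Ioi 0) ↔ IntegrableOn g (Ioo 0 1) := by
  rw [← image_exp_neg_Ioi_zero, integrableOn_image_iff_integrableOn_abs_deriv_smul measurableSet_Ioi
    (fun u _ => hasDerivWithinAt_exp_neg u _) (fun a _ b _ h => neg_injective (exp_injective h))]
  simp [abs_of_pos (exp_pos _)]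

theorem exp_neg_mul_pow_mul_neg_log_pow (m k : ℕ) (u : ℝ) :
    exp (-u) * (exp (-u) ^ m * (-log (exp (-u))) ^ k) = u ^ k * exp (-((m + 1) * u)) := by
  rw [log_exp, neg_neg, ← exp_nat_mul, ← mul_assoc, ← exp_add]
  ring_nf

theorem integrableOn_pow_mul_neg_log_pow (m k : ℕ) :
    IntegrableOn (fun t : ℝ => t ^ m * (-log t) ^ k) (Ioo 0 1) := by
  rw [← integrableOn_comp_exp_neg_Ioi]
  simp only [smul_eq_mul, exp_neg_mul_pow_mul_neg_log_pow]
  have := integrableOn_rpow_mul_exp_neg_mul_rpow (s := k) (p := 1) (b := m + 1)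
    (neg_one_lt_zero.trans_le k.cast_nonneg) one_pos (by positivity)
  refine this.congr_fun (fun u _ => ?_) measurableSet_Ioi
  simp only [rpow_natCast, rpow_one, neg_mul]

theorem integral_pow_mul_neg_log_pow (m k : ℕ) :
    ∫ t in Ioo 0 1, t ^ m * (-log t) ^ k = k ! / ((m : ℝ) + 1) ^ (k + 1) := by
  rw [← integral_comp_exp_neg_Ioi]
  simp only [smul_eq_mul, exp_neg_mul_pow_mul_neg_log_pow]
  have := integral_rpow_mul_exp_neg_mul_Ioi (a := k + 1) (r := m + 1)
    (by positivity) (by positivity)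
  rw [Gamma_nat_eq_factorial, add_sub_cancel_right,
    show (k : ℝ) + 1 = (k + 1 : ℕ) by push_cast; rfl, rpow_natCast] at this
  simp_rw [rpow_natCast] at this
  rw [this, one_div, inv_pow, inv_mul_eq_div]

theorem integral_mul_neg_log_pow_of_hasSum {a : ℕ → ℝ} {f : ℝ → ℝ} (k : ℕ)
    (hf : ∀ t ∈ Ioo (0 : ℝ) 1, HasSum (fun m => a m * t ^ m) (f t))
    (ha : Summable fun m : ℕ => |a m| / ((m : ℝ) + 1) ^ (k + 1)) :
    ∫ t in (0 : ℝ)..1, f t * (-log t) ^ k = k ! * ∑' m : ℕ, a m / ((m : ℝ) + 1) ^ (k + 1) := by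
  set F : ℕ → ℝ → ℝ := fun m t => a m * (t ^ m * (-log t) ^ k)
  have hF_int (m : ℕ) : Integrable (F m) (volume.restrict (Ioo 0 1)) :=
    (integrableOn_pow_mul_neg_log_pow m k).const_mul (a m)
  have hF_norm (m : ℕ) :
      ∫ t in Ioo 0 1, ‖F m t‖ = k ! * (|a m| / ((m : ℝ) + 1) ^ (k + 1)) := by
    rw [mul_div_left_comm, ← integral_pow_mul_neg_log_pow, ← integral_const_mul]
    refine setIntegral_congr_fun measurableSet_Ioo fun t ht => ?_
    have hlog : 0 ≤ -log t := neg_nonneg.mpr (log_nonpos ht.1.le ht.2.le)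
    rw [norm_mul, Real.norm_eq_abs,
      Real.norm_of_nonneg (mul_nonneg (pow_nonneg ht.1.le m) (pow_nonneg hlog k))]
  have hswap := hasSum_integral_of_summable_integral_norm hF_int
    ((ha.mul_left (k ! : ℝ)).congr fun m => (hF_norm m).symm)
  calc ∫ t in (0 : ℝ)..1, f t * (-log t) ^ k = ∫ t in Ioo 0 1, ∑' m, F m t := by
        rw [intervalIntegral.integral_of_le zero_le_one, integral_Ioc_eq_integral_Ioo]
        refine setIntegral_congr_fun measurableSet_Ioo fun t ht => ?_
        simp_rw [F, ← mul_assoc]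
        exact ((hf t ht).mul_right _).tsum_eq.symm
    _ = ∑' m, k ! * (a m / ((m : ℝ) + 1) ^ (k + 1)) := by
        rw [← hswap.tsum_eq]
        refine tsum_congr fun m => ?_
        rw [integral_const_mul, integral_pow_mul_neg_log_pow]
        ring
    _ = _ := tsum_mul_left

end Integrals

theorem stmt4 (j k : ℕ) (hk : 1 ≤ k) :
    ∫ t in (0:ℝ)..1, (Real.log (1+t))^j * (Real.log t)^k / (1+t) =
      (-1:ℝ)^(k+j) * (Nat.factorial k : ℝ) * (Nat.factorial j : ℝ) *
      ∑' n : ℕ, (-1:ℝ)^n * (stirling (n+1) (j+1) : ℝ) /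
        ((Nat.factorial (n+1) : ℝ) * ((n:ℝ)+1)^k) := by
  have hf : ∀ t ∈ Set.Ioo (0 : ℝ) 1, HasSum (fun m => (-1) ^ m * stirlingCoeff (j + 1) m * t ^ m)
      ((-log (1 + t)) ^ j / (j ! * (1 + t))) := by
    intro t ht
    have hx : |-t| < 1 := by rw [abs_neg, abs_of_pos ht.1]; exact ht.2
    have := hasSum_stirlingCoeff_mul_pow j hx
    rw [sub_neg_eq_add] at this
    exact this.congr_fun fun m => by rw [neg_pow]; ring
  have ha : Summable fun m : ℕ => |(-1) ^ m * stirlingCoeff (j + 1) m| / ((m : ℝ) + 1) ^ (k + 1) :=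
    (summable_stirlingCoeff_div_pow (j + 1) hk).congr fun m => by
      rw [abs_mul, abs_neg_one_pow, one_mul, abs_of_nonneg (stirlingCoeff_nonneg _ _)]
  calc ∫ t in (0:ℝ)..1, (Real.log (1+t))^j * (Real.log t)^k / (1+t)
      = ∫ t in (0:ℝ)..1, (-1) ^ (k + j) * j ! *
          ((-log (1 + t)) ^ j / (j ! * (1 + t)) * (-log t) ^ k) := by
        refine intervalIntegral.integral_congr fun t _ => ?_
        rw [neg_pow (log (1 + t)), neg_pow (log t)]
        field_simp
        ring_nf
        simp
    _ = _ := by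
        have hterm (m : ℕ) : (-1) ^ m * stirlingCoeff (j + 1) m / ((m : ℝ) + 1) ^ (k + 1) =
            (-1) ^ m * (stirling (m + 1) (j + 1) : ℝ) / ((m + 1)! * ((m : ℝ) + 1) ^ k) := by
          rw [stirlingCoeff, stirling_eq_stirlingFirst, Nat.factorial_succ]
          push_cast
          field_simp
          ring
        rw [intervalIntegral.integral_const_mul, integral_mul_neg_log_pow_of_hasSum k hf ha,
          tsum_congr hterm]
        ring
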